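/- Assume h ∘ h = 0, h(Y) = 0, and that v := −(1/2)·g₀(h(X₀), X₀) is nonzero. Then there exists a unique vector X₁ ∈ V such that h(z) = −2v · g₀(X₁, z) · X₁ for all z ∈ V and g₀(X₁, X₀) = 1. Moreover this X₁ satisfies g₀(X₁, X₁) = 0 (X₁ is lightlike for g₀) and g₀(X₁, Y) = 0; consequently g₀ + h = g₀ − 2v · X₁♭ ⊗ X₁♭. -/

import Mathlib

/-!
Self-adjointness turns `h ∘ h = 0` and `h Y = 0` into: every vector `h u` is `g₀`-isotropic and
`g₀`-orthogonal to `Y`. Positivity on `{Y, X₀}ᗮ` then forces `h u = 0` as soon as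
`g₀ (h u) X₀ = 0`, so `h z - (g₀ (h z) X₀ / g₀ (h X₀) X₀) • h X₀ = 0` for every `z`: the range
of `h` is the line through `h X₀`. Normalising, `X₁ = (-2v)⁻¹ • h X₀`, which is forced by
evaluating `h = -2v X₁♭ ⊗ X₁` at `X₀`; being a multiple of `h X₀`, it is lightlike and
orthogonal to `Y`.
-/

namespace LinearMap

section CommRing

variable {R V : Type*} [CommRing R] [AddCommGroup V] [Module R V]
  {B : V →ₗ[R] V →ₗ[R] R} {h : V →ₗ[R] V}

theorem IsSelfAdjoint.apply_apply_self_eq_zero (hB : B.IsSelfAdjoint h) (hnil : h ∘ₗ h = 0)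
    (u : V) : B (h u) (h u) = 0 := by
  rw [hB, ← comp_apply h h, hnil, zero_apply, map_zero]

theorem IsSelfAdjoint.apply_left_eq_zero_of_apply_eq_zero (hB : B.IsSelfAdjoint h) {Y : V}
    (hY : h Y = 0) (u : V) : B (h u) Y = 0 := by
  rw [hB, hY, map_zero]

end CommRing

section Field

variable {K V : Type*} [Field K] [AddCommGroup V] [Module K V]
  {B : V →ₗ[K] V →ₗ[K] K} {h : V →ₗ[K] V} {X₀ : V}

theorem apply_eq_smul_apply_of_apply_eq_zero (hX₀ : ∀ u, B (h u) X₀ = 0 → h u = 0)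
    (ha : B (h X₀) X₀ ≠ 0) (z : V) :
    h z = (B (h z) X₀ / B (h X₀) X₀) • h X₀ := by
  set c := B (h z) X₀ / B (h X₀) X₀
  have hdiff : h (z - c • X₀) = 0 := hX₀ _ <| by
    simp only [map_sub, map_smul, sub_apply, smul_apply, smul_eq_mul, c, div_mul_cancel₀ _ ha,
      sub_self]
  rwa [map_sub, map_smul, sub_eq_zero] at hdiff

theorem apply_eq_smul_inv_smul_apply (hsymm : ∀ u v, B u v = B v u) (hB : B.IsSelfAdjoint h)
    (hX₀ : ∀ u, B (h u) X₀ = 0 → h u = 0) (ha : B (h X₀) X₀ ≠ 0) (z : V) :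
    h z = (B (h X₀) X₀ * B ((B (h X₀) X₀)⁻¹ • h X₀) z) • ((B (h X₀) X₀)⁻¹ • h X₀) := by
  rw [apply_eq_smul_apply_of_apply_eq_zero hX₀ ha z, smul_smul, map_smul, smul_apply,
    smul_eq_mul, hB, hsymm z]
  congr 1
  field_simp

theorem eq_inv_smul_of_apply_eq_smul {X₁ : V} {a : K} (hX₁ : ∀ z, h z = (a * B X₁ z) • X₁)
    (hn : B X₁ X₀ = 1) (ha : a ≠ 0) : X₁ = a⁻¹ • h X₀ := by
  rw [hX₁ X₀, hn, mul_one, smul_smul, inv_mul_cancel₀ ha, one_smul]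

end Field

end LinearMap

theorem stmt3 {V : Type*} [AddCommGroup V] [Module ℝ V]
    (g₀ : V →ₗ[ℝ] V →ₗ[ℝ] ℝ) (hg₀symm : ∀ u v : V, g₀ u v = g₀ v u)
    (h : V →ₗ[ℝ] V) (hsymm : ∀ u v : V, g₀ (h u) v = g₀ u (h v))
    (Y X₀ : V)
    (hpos : ∀ w : V, w ≠ 0 → g₀ w Y = 0 → g₀ w X₀ = 0 → 0 < g₀ w w)
    (hnil : h ∘ₗ h = 0) (hY0 : h Y = 0)
    (v : ℝ) (hv : v = -(1/2) * g₀ (h X₀) X₀) (hvne : v ≠ 0) :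
    (∃! X₁ : V, (∀ z : V, h z = (-2 * v * g₀ X₁ z) • X₁) ∧ g₀ X₁ X₀ = 1) ∧
    (∀ X₁ : V, ((∀ z : V, h z = (-2 * v * g₀ X₁ z) • X₁) ∧ g₀ X₁ X₀ = 1) →
      g₀ X₁ X₁ = 0 ∧ g₀ X₁ Y = 0) := by
  have hB : g₀.IsSelfAdjoint h := hsymm
  have ha : g₀ (h X₀) X₀ = -2 * v := by rw [hv]; ring
  have ha0 : -2 * v ≠ 0 := mul_ne_zero (by norm_num) hvne
  have hX₀ (u : V) (hu : g₀ (h u) X₀ = 0) : h u = 0 := by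
    by_contra hne
    exact (hpos _ hne (hB.apply_left_eq_zero_of_apply_eq_zero hY0 u) hu).ne'
      (hB.apply_apply_self_eq_zero hnil u)
  refine ⟨⟨(-2 * v)⁻¹ • h X₀, ⟨?_, ?_⟩,
    fun X₁ hX₁ => LinearMap.eq_inv_smul_of_apply_eq_smul hX₁.1 hX₁.2 ha0⟩, fun X₁ hX₁ => ?_⟩
  · simpa only [ha] using LinearMap.apply_eq_smul_inv_smul_apply hg₀symm hB hX₀ (ha ▸ ha0)
  · rw [map_smul, LinearMap.smul_apply, ha, smul_eq_mul, inv_mul_cancel₀ ha0]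
  · rw [LinearMap.eq_inv_smul_of_apply_eq_smul hX₁.1 hX₁.2 ha0]
    simp only [map_smul, LinearMap.smul_apply, hB.apply_apply_self_eq_zero hnil,
      hB.apply_left_eq_zero_of_apply_eq_zero hY0, smul_zero, and_self]
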